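/- Let n≥4 be even, 3≤m≤n, and let σ be the reflection x ↦ n+1-x (mod n), which has no fixed points on {1,...,n}. The number of good binary n-tuples with exactly m ones fixed by σ equals binom(n/2, m/2) - 2·binom(⌊(n+2)/4⌋, m/2); in particular it is 0 when m is odd. -/
import Mathlib


/-- A binary `n`-tuple (a function `ZMod n → Bool`) is *good* if it is not identically
false and every cyclic gap between consecutive `true` positions is strictly less than
`n/2` (equivalently, every maximal cyclic block of zeros is short enough). -/
def GoodFun (n : ℕ) (a : ZMod n → Bool) : Prop :=
  (∃ i, a i = true) ∧
    ∀ i, a i = true → ∃ k : ℕ, 0 < k ∧ 2 * k < n ∧ a (i + (k : ZMod n)) = true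

/-- The number of ones of a binary `n`-tuple. -/
noncomputable def onesCount (n : ℕ) (a : ZMod n → Bool) : ℕ :=
  {i : ZMod n | a i = true}.ncard

namespace FixGoodAux

lemma mod_cases {n a b : ℕ} (ha : a < 2 * n) (hb : b < n)
    (h : (a : ZMod n) = (b : ZMod n)) : a = b ∨ a = b + n := by
  rw [ZMod.natCast_eq_natCast_iff] at h
  have h' : a % n = b % n := h
  rcases lt_or_ge a n with h1 | h1
  · rw [Nat.mod_eq_of_lt h1, Nat.mod_eq_of_lt hb] at h'; omega
  · rw [Nat.mod_eq_sub_mod h1, Nat.mod_eq_of_lt hb, Nat.mod_eq_of_lt (show a - n < n by omega)] at h'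
    omega

/-- The symmetric configuration determined by a set of "pair indices". -/
def Phi (n : ℕ) (T : Finset ℕ) : ZMod n → Bool :=
  fun i => decide (∃ j ∈ T, ((j : ZMod n) = i ∨ 1 - (j : ZMod n) = i))

lemma phi_true {n : ℕ} {T : Finset ℕ} {i : ZMod n} :
    Phi n T i = true ↔ ∃ j ∈ T, ((j : ZMod n) = i ∨ 1 - (j : ZMod n) = i) := by
  simp [Phi]

lemma phi_symm (n : ℕ) (T : Finset ℕ) (i : ZMod n) : Phi n T (1 - i) = Phi n T i := by
  simp only [Phi, decide_eq_decide]
  constructor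
  · rintro ⟨j, hj, h | h⟩
    · exact ⟨j, hj, Or.inr (by linear_combination -h)⟩
    · exact ⟨j, hj, Or.inl (by linear_combination -h)⟩
  · rintro ⟨j, hj, h | h⟩
    · exact ⟨j, hj, Or.inr (by linear_combination -h)⟩
    · exact ⟨j, hj, Or.inl (by linear_combination -h)⟩

lemma phi_mem_iff {n h : ℕ} (hnh : n = 2 * h) (hh : 2 ≤ h) {T : Finset ℕ}
    (hT : T ⊆ Finset.Icc 1 h) {j : ℕ} (hj1 : 1 ≤ j) (hj2 : j ≤ h) :
    Phi n T ((j : ℕ) : ZMod n) = true ↔ j ∈ T := by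
  have hbound : ∀ x ∈ T, 1 ≤ x ∧ x ≤ h := by intro x hx; simpa using hT hx
  rw [phi_true]
  constructor
  · rintro ⟨j', hj', hc | hc⟩
    · have hb := hbound j' hj'
      rcases mod_cases (by omega) (by omega) hc with h1 | h1
      · rwa [h1] at hj'
      · omega
    · have hb := hbound j' hj'
      have hc' : ((j' + j : ℕ) : ZMod n) = ((1 : ℕ) : ZMod n) := by
        push_cast; linear_combination -hc
      rcases mod_cases (by omega) (by omega) hc' with h1 | h1 <;> omega
  · intro hjT
    exact ⟨j, hjT, Or.inl rfl⟩

lemma phi_ones {n h : ℕ} (hnh : n = 2 * h) (hh : 2 ≤ h) (T : Finset ℕ)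
    (hT : T ⊆ Finset.Icc 1 h) :
    {i : ZMod n | Phi n T i = true}.ncard = 2 * T.card := by
  classical
  have hbound : ∀ j ∈ T, 1 ≤ j ∧ j ≤ h := by
    intro j hj; simpa using hT hj
  set F : Finset (ZMod n) :=
    T.image (fun j : ℕ => (j : ZMod n)) ∪ T.image (fun j : ℕ => 1 - (j : ZMod n)) with hF
  have hset : {i : ZMod n | Phi n T i = true} = ↑F := by
    ext i
    rw [Set.mem_setOf_eq, phi_true, Finset.mem_coe, hF, Finset.mem_union]
    simp only [Finset.mem_image]
    constructor
    · rintro ⟨j, hj, hc | hc⟩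
      · exact Or.inl ⟨j, hj, hc⟩
      · exact Or.inr ⟨j, hj, hc⟩
    · rintro (⟨j, hj, hc⟩ | ⟨j, hj, hc⟩)
      · exact ⟨j, hj, Or.inl hc⟩
      · exact ⟨j, hj, Or.inr hc⟩
  rw [hset, Set.ncard_coe_finset, hF]
  have hinj1 : Set.InjOn (fun j : ℕ => (j : ZMod n)) ↑T := by
    intro a ha b hb hab
    have ha' := hbound a ha; have hb' := hbound b hb
    rcases mod_cases (a := a) (b := b) (by omega) (by omega) hab with h1 | h1 <;> omega
  have hinj2 : Set.InjOn (fun j : ℕ => 1 - (j : ZMod n)) ↑T := by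
    intro a ha b hb hab
    have hab' : ((a : ℕ) : ZMod n) = ((b : ℕ) : ZMod n) := by
      simp only at hab; linear_combination -hab
    have ha' := hbound a ha; have hb' := hbound b hb
    rcases mod_cases (a := a) (b := b) (by omega) (by omega) hab' with h1 | h1 <;> omega
  have hdisj : Disjoint (T.image (fun j : ℕ => (j : ZMod n)))
      (T.image (fun j : ℕ => 1 - (j : ZMod n))) := by
    rw [Finset.disjoint_left]
    rintro x hx hx'
    obtain ⟨a, ha, rfl⟩ := Finset.mem_image.mp hx
    obtain ⟨b, hb, hab⟩ := Finset.mem_image.mp hx'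
    have ha' := hbound a ha; have hb' := hbound b hb
    have hc : ((b + a : ℕ) : ZMod n) = ((1 : ℕ) : ZMod n) := by
      push_cast; linear_combination -hab
    rcases mod_cases (a := b + a) (b := 1) (by omega) (by omega) hc with h1 | h1 <;> omega
  rw [Finset.card_union_of_disjoint hdisj, Finset.card_image_of_injOn hinj1,
    Finset.card_image_of_injOn hinj2]
  omega

lemma exists_rep {n h : ℕ} (hnh : n = 2 * h) (hh : 2 ≤ h) (a : ZMod n → Bool)
    (hsym : ∀ i, a (1 - i) = a i) :
    ∃ T : Finset ℕ, T ⊆ Finset.Icc 1 h ∧ Phi n T = a := by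
  classical
  haveI : NeZero n := ⟨by omega⟩
  set T : Finset ℕ := (Finset.Icc 1 h).filter (fun j => a ((j : ℕ) : ZMod n) = true) with hTdef
  have hmemT : ∀ j : ℕ, j ∈ T ↔ (1 ≤ j ∧ j ≤ h) ∧ a ((j : ℕ) : ZMod n) = true := by
    intro j; rw [hTdef, Finset.mem_filter, Finset.mem_Icc]
  refine ⟨T, Finset.filter_subset _ _, ?_⟩
  funext i
  have hv : ((i.val : ℕ) : ZMod n) = i := ZMod.natCast_rightInverse i
  have hvlt : i.val < n := ZMod.val_lt i
  have key : Phi n T i = true ↔ a i = true := by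
    constructor
    · rw [phi_true]
      rintro ⟨j, hj, hc | hc⟩
      · rw [← hc]; exact ((hmemT j).mp hj).2
      · rw [← hc, hsym]; exact ((hmemT j).mp hj).2
    · intro hai
      rw [phi_true]
      rcases le_or_gt i.val h with hcase | hcase
      · rcases Nat.eq_zero_or_pos i.val with h0 | h0
        · have hi0 : i = 0 := by rw [← hv, h0]; simp
          refine ⟨1, (hmemT 1).mpr ⟨⟨le_refl _, by omega⟩, ?_⟩, Or.inr ?_⟩
          · have : ((1 : ℕ) : ZMod n) = 1 - i := by rw [hi0]; push_cast; ring
            rw [this, hsym]; exact hai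
          · rw [hi0]; push_cast; ring
        · exact ⟨i.val, (hmemT i.val).mpr ⟨⟨h0, hcase⟩, by rw [hv]; exact hai⟩, Or.inl hv⟩
      · set w : ℕ := n + 1 - i.val with hw
        have hcw : ((w : ℕ) : ZMod n) = 1 - i := by
          have h1 : i.val ≤ n + 1 := by omega
          rw [hw]
          push_cast [h1]
          rw [ZMod.natCast_self, hv]; ring
        refine ⟨w, (hmemT w).mpr ⟨⟨by omega, by omega⟩, ?_⟩, Or.inr ?_⟩
        · rw [hcw, hsym]; exact hai
        · rw [hcw]; ring
  by_cases hai : a i = true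
  · rw [hai, key.mpr hai]
  · have h1 : a i = false := by simpa using hai
    have h2 : Phi n T i = false := by
      rcases Bool.eq_false_or_eq_true (Phi n T i) with h' | h'
      · exact absurd (key.mp h') hai
      · exact h'
    rw [h1, h2]

lemma not_good_left {n h q : ℕ} (hnh : n = 2 * h) (hh : 2 ≤ h)
    (hq1 : h ≤ 2 * q) (hq2 : 2 * q ≤ h + 1) {T : Finset ℕ}
    (hT : T ⊆ Finset.Icc 1 q) (hne : T.Nonempty) : ¬ GoodFun n (Phi n T) := by
  have hbound : ∀ j ∈ T, 1 ≤ j ∧ j ≤ q := by intro j hj; simpa using hT hj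
  set j₀ := T.max' hne with hj₀def
  have hj₀T : j₀ ∈ T := T.max'_mem hne
  have hj₀ := hbound j₀ hj₀T
  rintro ⟨-, hg⟩
  obtain ⟨k, hk0, hk2, hk⟩ := hg (j₀ : ZMod n) (phi_true.mpr ⟨j₀, hj₀T, Or.inl rfl⟩)
  obtain ⟨j, hjT, hc | hc⟩ := phi_true.mp hk
  · have hj := hbound j hjT
    have hle : j ≤ j₀ := T.le_max' j hjT
    have hc' : ((j : ℕ) : ZMod n) = ((j₀ + k : ℕ) : ZMod n) := by
      push_cast; linear_combination hc
    rcases mod_cases (by omega) (by omega) hc' with h1 | h1 <;> omega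
  · have hj := hbound j hjT
    have hc' : ((j + j₀ + k : ℕ) : ZMod n) = ((1 : ℕ) : ZMod n) := by
      push_cast; linear_combination -hc
    rcases mod_cases (by omega) (by omega) hc' with h1 | h1 <;> omega

lemma not_good_right {n h q : ℕ} (hnh : n = 2 * h) (hh : 2 ≤ h)
    (hq1 : h ≤ 2 * q) (hq2 : 2 * q ≤ h + 1) {T : Finset ℕ}
    (hT : T ⊆ Finset.Icc (h - q + 1) h) (hne : T.Nonempty) : ¬ GoodFun n (Phi n T) := by
  have hbound : ∀ j ∈ T, h - q + 1 ≤ j ∧ j ≤ h := by intro j hj; simpa using hT hj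
  set j₀ := T.min' hne with hj₀def
  have hj₀T : j₀ ∈ T := T.min'_mem hne
  have hj₀ := hbound j₀ hj₀T
  rintro ⟨-, hg⟩
  obtain ⟨k, hk0, hk2, hk⟩ := hg (1 - (j₀ : ZMod n)) (phi_true.mpr ⟨j₀, hj₀T, Or.inr rfl⟩)
  obtain ⟨j, hjT, hc | hc⟩ := phi_true.mp hk
  · have hj := hbound j hjT
    have hc' : ((j + j₀ : ℕ) : ZMod n) = ((1 + k : ℕ) : ZMod n) := by
      push_cast; linear_combination hc
    rcases mod_cases (by omega) (by omega) hc' with h1 | h1 <;> omega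
  · have hj := hbound j hjT
    have hle : j₀ ≤ j := T.min'_le j hjT
    have hc' : ((j₀ : ℕ) : ZMod n) = ((j + k : ℕ) : ZMod n) := by
      push_cast; linear_combination hc
    rcases mod_cases (by omega) (by omega) hc' with h1 | h1 <;> omega

lemma good_of_spread {n h q : ℕ} (hnh : n = 2 * h) (hh : 2 ≤ h)
    (hq1 : h ≤ 2 * q) (hq2 : 2 * q ≤ h + 1) {T : Finset ℕ}
    (hT : T ⊆ Finset.Icc 1 h) {j₁ j₂ : ℕ} (hj₁T : j₁ ∈ T) (hj₂T : j₂ ∈ T)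
    (hj₁ : q < j₁) (hj₂ : j₂ ≤ h - q) : GoodFun n (Phi n T) := by
  have hq0 : 1 ≤ q := by omega
  have hb₁ : 1 ≤ j₁ ∧ j₁ ≤ h := by simpa using hT hj₁T
  have hb₂ : 1 ≤ j₂ ∧ j₂ ≤ h := by simpa using hT hj₂T
  haveI : NeZero n := ⟨by omega⟩
  constructor
  · exact ⟨(j₁ : ZMod n), phi_true.mpr ⟨j₁, hj₁T, Or.inl rfl⟩⟩
  intro i _
  have hv : ((i.val : ℕ) : ZMod n) = i := ZMod.natCast_rightInverse i
  have hvlt : i.val < n := ZMod.val_lt i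
  set v := i.val with hvdef
  rcases lt_or_ge v j₂ with hcase | hcase
  · refine ⟨j₂ - v, by omega, by omega, phi_true.mpr ⟨j₂, hj₂T, Or.inl ?_⟩⟩
    have e : ((v + (j₂ - v) : ℕ) : ZMod n) = ((j₂ : ℕ) : ZMod n) := by
      rw [show v + (j₂ - v) = j₂ by omega]
    push_cast at e
    rw [← hv]; linear_combination -e
  rcases lt_or_ge v j₁ with hcase2 | hcase2
  · refine ⟨j₁ - v, by omega, by omega, phi_true.mpr ⟨j₁, hj₁T, Or.inl ?_⟩⟩
    have e : ((v + (j₁ - v) : ℕ) : ZMod n) = ((j₁ : ℕ) : ZMod n) := by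
      rw [show v + (j₁ - v) = j₁ by omega]
    push_cast at e
    rw [← hv]; linear_combination -e
  rcases lt_or_ge v (n + 1 - j₁) with hcase3 | hcase3
  · refine ⟨n + 1 - j₁ - v, by omega, by omega, phi_true.mpr ⟨j₁, hj₁T, Or.inr ?_⟩⟩
    have e : ((v + (n + 1 - j₁ - v) + j₁ : ℕ) : ZMod n) = ((n + 1 : ℕ) : ZMod n) := by
      rw [show v + (n + 1 - j₁ - v) + j₁ = n + 1 by omega]
    push_cast [ZMod.natCast_self] at e
    rw [← hv]; linear_combination -e
  rcases lt_or_ge v (n + 1 - j₂) with hcase4 | hcase4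
  · refine ⟨n + 1 - j₂ - v, by omega, by omega, phi_true.mpr ⟨j₂, hj₂T, Or.inr ?_⟩⟩
    have e : ((v + (n + 1 - j₂ - v) + j₂ : ℕ) : ZMod n) = ((n + 1 : ℕ) : ZMod n) := by
      rw [show v + (n + 1 - j₂ - v) + j₂ = n + 1 by omega]
    push_cast [ZMod.natCast_self] at e
    rw [← hv]; linear_combination -e
  · refine ⟨n + j₂ - v, by omega, by omega, phi_true.mpr ⟨j₂, hj₂T, Or.inl ?_⟩⟩
    have e : ((v + (n + j₂ - v) : ℕ) : ZMod n) = ((n + j₂ : ℕ) : ZMod n) := by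
      rw [show v + (n + j₂ - v) = n + j₂ by omega]
    push_cast [ZMod.natCast_self] at e
    rw [← hv]; linear_combination -e

lemma count_T {h q t : ℕ} (hh : 2 ≤ h) (hq1 : h ≤ 2 * q) (hq2 : 2 * q ≤ h + 1)
    (hqh : q ≤ h) (ht : 2 ≤ t) :
    (((Finset.Icc 1 h).powersetCard t).filter
        (fun T => ¬ T ⊆ Finset.Icc 1 q ∧ ¬ T ⊆ Finset.Icc (h - q + 1) h)).card
      = h.choose t - (q.choose t + q.choose t) ∧
      q.choose t + q.choose t ≤ h.choose t := by
  classical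
  set A := (Finset.Icc 1 q).powersetCard t with hA
  set B := (Finset.Icc (h - q + 1) h).powersetCard t with hB
  set U := (Finset.Icc 1 h).powersetCard t with hU
  have hAU : A ⊆ U := Finset.powersetCard_mono (Finset.Icc_subset_Icc (le_refl 1) hqh)
  have hBU : B ⊆ U := Finset.powersetCard_mono (Finset.Icc_subset_Icc (by omega) (le_refl h))
  have hdisj : Disjoint A B := by
    rw [Finset.disjoint_left]
    intro T hTA hTB
    obtain ⟨hTsA, hTc⟩ := Finset.mem_powersetCard.mp hTA
    obtain ⟨hTsB, -⟩ := Finset.mem_powersetCard.mp hTB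
    obtain ⟨x, hx, y, hy, hxy⟩ := Finset.one_lt_card.mp (by omega : 1 < T.card)
    have hx1 := Finset.mem_Icc.mp (hTsA hx)
    have hx2 := Finset.mem_Icc.mp (hTsB hx)
    have hy1 := Finset.mem_Icc.mp (hTsA hy)
    have hy2 := Finset.mem_Icc.mp (hTsB hy)
    omega
  have hfilter : ((Finset.Icc 1 h).powersetCard t).filter
        (fun T => ¬ T ⊆ Finset.Icc 1 q ∧ ¬ T ⊆ Finset.Icc (h - q + 1) h)
      = U \ (A ∪ B) := by
    ext T
    rw [Finset.mem_filter, Finset.mem_sdiff, Finset.mem_union, hU]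
    constructor
    · rintro ⟨hTU, hn1, hn2⟩
      refine ⟨hTU, ?_⟩
      rintro (hTA | hTB)
      · exact hn1 (Finset.mem_powersetCard.mp hTA).1
      · exact hn2 (Finset.mem_powersetCard.mp hTB).1
    · rintro ⟨hTU, hnotin⟩
      have hTc := (Finset.mem_powersetCard.mp hTU).2
      refine ⟨hTU, fun hs => hnotin (Or.inl (Finset.mem_powersetCard.mpr ⟨hs, hTc⟩)),
        fun hs => hnotin (Or.inr (Finset.mem_powersetCard.mpr ⟨hs, hTc⟩))⟩
  have hcardA : A.card = q.choose t := by
    rw [hA, Finset.card_powersetCard, Nat.card_Icc]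
    congr 1
  have hcardB : B.card = q.choose t := by
    rw [hB, Finset.card_powersetCard, Nat.card_Icc]
    congr 1
    omega
  have hcardU : U.card = h.choose t := by
    rw [hU, Finset.card_powersetCard, Nat.card_Icc]
    congr 1
  have hsub : A ∪ B ⊆ U := Finset.union_subset hAU hBU
  have hcardAB : (A ∪ B).card = q.choose t + q.choose t := by
    rw [Finset.card_union_of_disjoint hdisj, hcardA, hcardB]
  have hle : q.choose t + q.choose t ≤ h.choose t := by
    rw [← hcardAB, ← hcardU]; exact Finset.card_le_card hsub
  refine ⟨?_, hle⟩
  rw [hfilter, Finset.card_sdiff_of_subset hsub, hcardAB, hcardU]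

end FixGoodAux

open FixGoodAux in
/-- For even `n ≥ 4` and `3 ≤ m ≤ n`, the number of good binary `n`-tuples with
exactly `m` ones fixed by the fixed-point-free reflection `x ↦ 1 - x (mod n)` equals
`C(n/2, m/2) - 2·C(⌊(n+2)/4⌋, m/2)`, interpreted as `0` when `m` is odd. -/
theorem fix_good_m_reflection_free (n m : ℕ) (hn : 4 ≤ n) (heven : Even n)
    (hm : 3 ≤ m) (hmn : m ≤ n) :
    ({a : ZMod n → Bool | GoodFun n a ∧ onesCount n a = m ∧ ∀ i, a (1 - i) = a i}.ncard : ℤ)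
      = if Even m then ((n / 2).choose (m / 2) : ℤ) - 2 * ((n + 2) / 4).choose (m / 2)
        else 0 := by
  classical
  obtain ⟨r, hr⟩ := heven
  set h : ℕ := n / 2 with hhdef
  set q : ℕ := (n + 2) / 4 with hqdef
  have hnh : n = 2 * h := by omega
  have hh : 2 ≤ h := by omega
  have hq1 : h ≤ 2 * q := by omega
  have hq2 : 2 * q ≤ h + 1 := by omega
  have hqh : q ≤ h := by omega
  by_cases hme : Even m
  · -- even case
    rw [if_pos hme]
    obtain ⟨s, hs⟩ := hme
    set t : ℕ := m / 2 with htdef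
    have hmt : m = 2 * t := by omega
    have ht : 2 ≤ t := by omega
    set 𝒯 : Finset (Finset ℕ) := ((Finset.Icc 1 h).powersetCard t).filter
        (fun T => ¬ T ⊆ Finset.Icc 1 q ∧ ¬ T ⊆ Finset.Icc (h - q + 1) h) with h𝒯
    have hset : {a : ZMod n → Bool | GoodFun n a ∧ onesCount n a = m ∧ ∀ i, a (1 - i) = a i}
        = (fun T => Phi n T) '' ↑𝒯 := by
      ext a
      simp only [Set.mem_setOf_eq, Set.mem_image, Finset.mem_coe]
      constructor
      · rintro ⟨hgood, hones, hsym⟩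
        obtain ⟨T, hT, hPhi⟩ := exists_rep hnh hh a hsym
        have hcnt : {i : ZMod n | a i = true}.ncard = 2 * T.card := by
          rw [← hPhi]; exact phi_ones hnh hh T hT
        simp only [onesCount] at hones
        have hTcard : T.card = t := by omega
        have hne : T.Nonempty := Finset.card_pos.mp (by omega)
        refine ⟨T, ?_, hPhi⟩
        rw [h𝒯, Finset.mem_filter]
        refine ⟨Finset.mem_powersetCard.mpr ⟨hT, hTcard⟩, ?_, ?_⟩
        · intro hsub
          exact not_good_left hnh hh hq1 hq2 hsub hne (hPhi ▸ hgood)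
        · intro hsub
          exact not_good_right hnh hh hq1 hq2 hsub hne (hPhi ▸ hgood)
      · rintro ⟨T, hT𝒯, rfl⟩
        rw [h𝒯, Finset.mem_filter] at hT𝒯
        obtain ⟨hTU, hn1, hn2⟩ := hT𝒯
        obtain ⟨hTsub, hTcard⟩ := Finset.mem_powersetCard.mp hTU
        obtain ⟨j₁, hj₁T, hj₁n⟩ := Finset.not_subset.mp hn1
        obtain ⟨j₂, hj₂T, hj₂n⟩ := Finset.not_subset.mp hn2
        have hb₁ := Finset.mem_Icc.mp (hTsub hj₁T)
        have hb₂ := Finset.mem_Icc.mp (hTsub hj₂T)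
        rw [Finset.mem_Icc] at hj₁n hj₂n
        refine ⟨good_of_spread hnh hh hq1 hq2 hTsub hj₁T hj₂T (by omega) (by omega), ?_,
          phi_symm n T⟩
        simp only [onesCount]
        rw [phi_ones hnh hh T hTsub, hTcard]
        omega
    have hinj : Set.InjOn (fun T => Phi n T) ↑𝒯 := by
      intro T hT T' hT' heq
      simp only at heq
      rw [Finset.mem_coe, h𝒯, Finset.mem_filter] at hT hT'
      have hTsub := (Finset.mem_powersetCard.mp hT.1).1
      have hTsub' := (Finset.mem_powersetCard.mp hT'.1).1
      ext j
      by_cases hjI : j ∈ Finset.Icc 1 h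
      · rw [Finset.mem_Icc] at hjI
        rw [← phi_mem_iff hnh hh hTsub hjI.1 hjI.2, ← phi_mem_iff hnh hh hTsub' hjI.1 hjI.2,
          heq]
      · constructor
        · intro hj; exact absurd (hTsub hj) hjI
        · intro hj; exact absurd (hTsub' hj) hjI
    rw [hset, Set.ncard_image_of_injOn hinj, Set.ncard_coe_finset]
    obtain ⟨hc1, hc2⟩ := count_T hh hq1 hq2 hqh ht
    rw [h𝒯, hc1]
    push_cast [Nat.cast_sub hc2]
    ring
  · -- odd case
    rw [if_neg hme]
    have hempty : {a : ZMod n → Bool | GoodFun n a ∧ onesCount n a = m ∧ ∀ i, a (1 - i) = a i}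
        = ∅ := by
      rw [Set.eq_empty_iff_forall_notMem]
      rintro a ⟨-, hones, hsym⟩
      obtain ⟨T, hT, hPhi⟩ := exists_rep hnh hh a hsym
      have hcnt : {i : ZMod n | a i = true}.ncard = 2 * T.card := by
        rw [← hPhi]; exact phi_ones hnh hh T hT
      simp only [onesCount] at hones
      exact hme ⟨T.card, by omega⟩
    rw [hempty, Set.ncard_empty]
    norm_num
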